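/- arXiv:1709.04104 — 2 statements merged into one kernel-verified Lean document; each statement's English description precedes it below -/
import Mathlib

section
/- Let p, q ∈ ℝ[x] be nonzero polynomials such that p(n) ≠ 0 and q(n) ≠ 0 for every integer n ≥ 1. If the sequence of partial products P_N = ∏_{n=1}^{N} (p(n)/q(n))^{u_n} converges as N → ∞ to a nonzero limit, then p and q have the same degree and the same leading coefficient. -/
/-!
The factors of a product converging to a nonzero limit tend to `1`. Along `n = 3 * 2 ^ k` the
Thue–Morse sign is `+1` (doubling preserves the binary digit sum, and `3 = 11₂`), so there the
factors are `p(n) / q(n)` themselves; a rational function tending to `1` at infinity has numerator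
and denominator of the same degree and leading coefficient.
-/

open Filter Finset Topology Polynomial

def u (n : ℕ) : ℤ := (-1) ^ (Nat.digits 2 n).sum

theorem tendsto_one_of_tendsto_prod_Icc {K : Type*} [CommGroupWithZero K] [TopologicalSpace K]
    [ContinuousMul K] [ContinuousInv₀ K] [T1Space K] {f : ℕ → K} {L : K}
    (h : Tendsto (fun N => ∏ n ∈ Icc 1 N, f n) atTop (𝓝 L)) (hL : L ≠ 0) :
    Tendsto f atTop (𝓝 1) := by
  rw [← tendsto_add_atTop_iff_nat 1]
  have hquot : Tendsto (fun N => (∏ n ∈ Icc 1 (N + 1), f n) / ∏ n ∈ Icc 1 N, f n)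
      atTop (𝓝 1) := by
    rw [← div_self hL]
    exact (h.comp (tendsto_add_atTop_nat 1)).div h hL
  refine hquot.congr' ?_
  filter_upwards [h.eventually_ne hL] with N hN
  rw [prod_Icc_succ_top (by omega), mul_div_cancel_left₀ _ hN]

namespace Polynomial

variable {𝕜 : Type*} [NormedField 𝕜] [LinearOrder 𝕜] [IsStrictOrderedRing 𝕜] [OrderTopology 𝕜]

theorem degree_eq_and_leadingCoeff_eq_of_tendsto_div_one {P Q : 𝕜[X]} {l : Filter 𝕜} [l.NeBot]
    (hl : l ≤ atTop) (hQ : Q ≠ 0) (h : Tendsto (fun x => eval x P / eval x Q) l (𝓝 1)) :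
    P.degree = Q.degree ∧ P.leadingCoeff = Q.leadingCoeff := by
  have hdeg : P.degree = Q.degree := by
    rcases lt_trichotomy P.degree Q.degree with hlt | heq | hgt
    · exact absurd (tendsto_nhds_unique h
        ((div_tendsto_atTop_zero_of_degree_lt P Q hlt).mono_left hl)) one_ne_zero
    · exact heq
    · exact absurd ((abs_div_tendsto_atTop_atTop_of_degree_gt P Q hgt hQ).mono_left hl)
        (not_tendsto_atTop_of_tendsto_nhds h.abs)
  have hlc := tendsto_nhds_unique h
    ((div_tendsto_atTop_leadingCoeff_div_of_degree_eq P Q hdeg).mono_left hl)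
  exact ⟨hdeg, (div_eq_one_iff_eq (leadingCoeff_ne_zero.2 hQ)).1 hlc.symm⟩

end Polynomial

theorem u_two_mul (n : ℕ) : u (2 * n) = u n := by
  rcases Nat.eq_zero_or_pos n with rfl | hn
  · rfl
  · simp [u, Nat.digits_def' one_lt_two (by omega : 0 < 2 * n)]

theorem u_three_mul_two_pow (k : ℕ) : u (3 * 2 ^ k) = 1 := by
  induction k with
  | zero => decide
  | succ k ih => rw [pow_succ, mul_comm _ 2, ← mul_assoc, mul_comm 3, mul_assoc, u_two_mul, ih]

theorem tendsto_three_mul_two_pow_atTop : Tendsto (fun k : ℕ => 3 * 2 ^ k) atTop atTop :=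
  (tendsto_pow_atTop_atTop_of_one_lt one_lt_two).const_mul_atTop' (by norm_num)

theorem stmt_1_general (p q : Polynomial ℝ) (hq : q ≠ 0)
    (L : ℝ) (hL : L ≠ 0)
    (hconv : Tendsto (fun N : ℕ => ∏ n ∈ Finset.Icc 1 N,
      (p.eval (n : ℝ) / q.eval (n : ℝ)) ^ (u n)) atTop (𝓝 L)) :
    p.degree = q.degree ∧ p.leadingCoeff = q.leadingCoeff := by
  have hfactor := (tendsto_one_of_tendsto_prod_Icc hconv hL).comp tendsto_three_mul_two_pow_atTop
  refine degree_eq_and_leadingCoeff_eq_of_tendsto_div_one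
    (l := map (fun k : ℕ => ((3 * 2 ^ k : ℕ) : ℝ)) atTop)
    (tendsto_natCast_atTop_atTop.comp tendsto_three_mul_two_pow_atTop) hq ?_
  rw [tendsto_map'_iff]
  simpa [Function.comp_def, u_three_mul_two_pow] using hfactor

/-- If `p, q` are nonzero real polynomials, nonvanishing at the positive integers,
and the partial products `∏_{n=1}^{N} (p(n)/q(n))^{u_n}` converge to a nonzero
limit, then `p` and `q` have the same degree and the same leading coefficient. -/
theorem stmt_1 (p q : Polynomial ℝ) (hp : p ≠ 0) (hq : q ≠ 0)
    (hpn : ∀ n : ℕ, 1 ≤ n → p.eval (n : ℝ) ≠ 0)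
    (hqn : ∀ n : ℕ, 1 ≤ n → q.eval (n : ℝ) ≠ 0)
    (L : ℝ) (hL : L ≠ 0)
    (hconv : Tendsto (fun N : ℕ => ∏ n ∈ Finset.Icc 1 N,
      (p.eval (n : ℝ) / q.eval (n : ℝ)) ^ (u n)) atTop (𝓝 L)) :
    p.degree = q.degree ∧ p.leadingCoeff = q.leadingCoeff :=
  stmt_1_general p q hq L hL hconv
end

section
/- Let p, q ∈ ℝ[x] be nonzero polynomials such that p(n) ≠ 0 and q(n) ≠ 0 for every integer n ≥ 1. If p and q have the same degree and the same leading coefficient, then the sequence of partial products P_N = ∏_{n=1}^{N} (p(n)/q(n))^{u_n} converges as N → ∞ to a nonzero limit. -/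
open Filter Finset Topology Polynomial

/-!
Write `r n = p(n) / q(n)`. Since `u (2k+1) = -u (2k)`, the factors of index `2k` and `2k+1`
combine to `(r(2k) / r(2k+1)) ^ (±1)`. As `p` and `q` share degree and leading coefficient, the
cross difference `p(x) q(x+1) - p(x+1) q(x)` has degree at most `2 deg p - 2`, so
`r(n) / r(n+1) = 1 + O(1/n²)`. Hence the product over pairs converges absolutely, to a nonzero
limit because no factor vanishes, and since `r n → 1` an unpaired last factor does not change
the limit.
-/

lemma u_eq_one_or_neg_one (n : ℕ) : u n = 1 ∨ u n = -1 :=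
  (Nat.even_or_odd _).imp Even.neg_one_pow Odd.neg_one_pow

lemma u_two_mul_add_one (k : ℕ) : u (2 * k + 1) = -u (2 * k) := by
  have h : (Nat.digits 2 (2 * k + 1)).sum = (Nat.digits 2 (2 * k)).sum + 1 := by
    rw [add_comm, Nat.digits_add 2 one_lt_two 1 k one_lt_two (Or.inl one_ne_zero)]
    rcases eq_or_ne k 0 with rfl | hk
    · simp
    · rw [← zero_add (2 * k), Nat.digits_add 2 one_lt_two 0 k two_pos (Or.inr hk)]
      simp [add_comm]
  rw [u, u, h, pow_succ, mul_neg_one]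

lemma Nat.tendsto_of_tendsto_even_of_tendsto_odd {α : Type*} {f : ℕ → α} {l : Filter α}
    (h₀ : Tendsto (fun k => f (2 * k)) atTop l) (h₁ : Tendsto (fun k => f (2 * k + 1)) atTop l) :
    Tendsto f atTop l := by
  intro s hs
  obtain ⟨a, ha⟩ := eventually_atTop.1 (h₀ hs)
  obtain ⟨b, hb⟩ := eventually_atTop.1 (h₁ hs)
  refine eventually_atTop.2 ⟨2 * (a + b), fun n hn => ?_⟩
  obtain ⟨k, rfl | rfl⟩ := Nat.even_or_odd' n
  exacts [ha k (by omega), hb k (by omega)]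

lemma Finset.prod_range_two_mul {M : Type*} [CommMonoid M] (x : ℕ → M) (K : ℕ) :
    ∏ n ∈ range (2 * K), x n = ∏ k ∈ range K, x (2 * k) * x (2 * k + 1) := by
  induction K with
  | zero => simp
  | succ K ih => rw [mul_add_one, prod_range_succ, prod_range_succ, prod_range_succ, ih, mul_assoc]

lemma tendsto_prod_range_of_tendsto_prod_pairs {M : Type*} [CommMonoid M] [TopologicalSpace M]
    [ContinuousMul M] {x : ℕ → M} {L : M} (hx : Tendsto x atTop (𝓝 1))
    (h : Tendsto (fun K => ∏ k ∈ range K, x (2 * k) * x (2 * k + 1)) atTop (𝓝 L)) :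
    Tendsto (fun N => ∏ n ∈ range N, x n) atTop (𝓝 L) := by
  refine Nat.tendsto_of_tendsto_even_of_tendsto_odd (by simpa only [prod_range_two_mul] using h) ?_
  have h2 : Tendsto (fun k : ℕ => 2 * k) atTop atTop := tendsto_id.const_mul_atTop' two_pos
  simpa only [prod_range_succ, prod_range_two_mul, mul_one, Function.comp_def] using
    h.mul (hx.comp h2)

lemma exists_tendsto_prod_range_ne_zero {R : Type*} [NormedCommRing R] [NormOneClass R]
    [NormMulClass R] [CompleteSpace R] {y : ℕ → R} (hy : ∀ k, y k ≠ 0)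
    (hsum : Summable fun k => ‖y k - 1‖) :
    ∃ L ≠ 0, Tendsto (fun K => ∏ k ∈ range K, y k) atTop (𝓝 L) := by
  have hy' : y = fun k => 1 + (y k - 1) := by simp
  rw [hy']
  exact ⟨_, tprod_one_add_ne_zero_of_summable (by simpa using hy) hsum,
    (multipliable_one_add_of_summable hsum).hasProd.tendsto_prod_nat⟩

lemma Asymptotics.isBigO_zpow_sub_one {α 𝕜 : Type*} [NormedField 𝕜] {l : Filter α}
    {z : α → 𝕜} {e : α → ℤ} (hz : Tendsto z l (𝓝 1)) (he : ∀ a, e a = 1 ∨ e a = -1) :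
    (fun a => z a ^ e a - 1) =O[l] fun a => z a - 1 := by
  have hinv : ∀ᶠ a in l, ‖(z a)⁻¹‖ ≤ 2 := by
    have := (hz.inv₀ one_ne_zero).norm
    rw [inv_one, norm_one] at this
    exact this.eventually (eventually_le_nhds one_lt_two)
  refine IsBigO.of_bound 2 ?_
  filter_upwards [hinv, hz.eventually_ne one_ne_zero] with a ha hza
  rcases he a with h | h <;> rw [h]
  · rw [zpow_one]; linarith [norm_nonneg (z a - 1)]
  · rw [zpow_neg_one, show (z a)⁻¹ - 1 = (z a)⁻¹ * -(z a - 1) by field_simp; ring, norm_mul,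
      norm_neg]
    exact mul_le_mul_of_nonneg_right ha (norm_nonneg _)

lemma Polynomial.natDegree_taylor_sub_lt {R : Type*} [Ring R] {f : R[X]} {r : R}
    (h : taylor r f - f ≠ 0) : (taylor r f - f).natDegree < f.natDegree := by
  have hf : taylor r f ≠ 0 := fun h' => h (by simp_all)
  simpa using natDegree_lt_natDegree h
    (degree_sub_lt_left (degree_taylor f r) hf (leadingCoeff_taylor r f))

lemma Polynomial.degree_X_sq_mul_sub_taylor_mul_le {R : Type*} [CommRing R] [IsDomain R]
    {p q : R[X]} (hp : p ≠ 0) (hdeg : p.degree = q.degree)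
    (hlead : p.leadingCoeff = q.leadingCoeff) (r : R) :
    (X ^ 2 * (p * taylor r q - taylor r p * q)).degree ≤ (taylor r p * q).degree := by
  rcases eq_or_ne q p with rfl | hqp
  · simp [mul_comm]
  have hq : q ≠ 0 := fun h => hp (degree_eq_bot.1 (by rw [hdeg, h, degree_zero]))
  have hqd : q.natDegree = p.natDegree := (natDegree_eq_of_degree_eq hdeg).symm
  have hh : (q - p).natDegree < p.natDegree := natDegree_lt_natDegree (sub_ne_zero.2 hqp)
    (hdeg ▸ degree_sub_lt_left hdeg.symm hq hlead.symm)
  have hF : p * taylor r q - taylor r p * q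
      = p * (taylor r (q - p) - (q - p)) - (taylor r p - p) * (q - p) := by
    rw [map_sub]; ring
  have hFd : (p * taylor r q - taylor r p * q).natDegree ≤ 2 * p.natDegree - 2 := by
    rw [hF]
    refine (natDegree_sub_le _ _).trans (max_le ?_ ?_)
    · rcases eq_or_ne (taylor r (q - p) - (q - p)) 0 with h0 | h0
      · simp only [h0, mul_zero, natDegree_zero, zero_le]
      · have := natDegree_taylor_sub_lt h0
        exact natDegree_mul_le.trans (by omega)
    · rcases eq_or_ne (taylor r p - p) 0 with h0 | h0
      · simp only [h0, zero_mul, natDegree_zero, zero_le]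
      · have := natDegree_taylor_sub_lt h0
        exact natDegree_mul_le.trans (by omega)
  calc (X ^ 2 * (p * taylor r q - taylor r p * q)).degree
        ≤ ((2 * p.natDegree : ℕ) : WithBot ℕ) :=
        degree_le_of_natDegree_le (natDegree_mul_le.trans (by rw [natDegree_X_pow]; omega))
    _ = (taylor r p * q).degree := by
        rw [degree_eq_natDegree (mul_ne_zero (by simpa using hp) hq), natDegree_mul
          (by simpa using hp) hq, natDegree_taylor, hqd, two_mul]

section OrderedField

variable {𝕜 : Type*} [NormedField 𝕜] [LinearOrder 𝕜] [IsStrictOrderedRing 𝕜] [OrderTopology 𝕜]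

lemma Polynomial.isBigO_eval_div_eval_of_degree_X_pow_mul_le {P Q : 𝕜[X]} (hQ : Q ≠ 0) {k : ℕ}
    (h : (X ^ k * P).degree ≤ Q.degree) :
    (fun x => P.eval x / Q.eval x) =O[atTop] fun x => (x ^ k)⁻¹ := by
  have h1 : (fun x => x ^ k * P.eval x) =O[atTop] Q.eval := by
    simpa using isBigO_atTop_of_degree_le _ _ h
  refine (h1.mul (Asymptotics.isBigO_refl (fun x => (x ^ k * Q.eval x)⁻¹) atTop)).congr' ?_ ?_
  all_goals
    filter_upwards [eventually_ne_atTop 0, eventually_atTop_not_isRoot Q hQ] with x hx hQx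
    rw [IsRoot.def] at hQx
    field_simp

lemma Polynomial.isBigO_eval_ratio_sub_one {p q : 𝕜[X]} (hp : p ≠ 0) (hdeg : p.degree = q.degree)
    (hlead : p.leadingCoeff = q.leadingCoeff) :
    (fun x => p.eval x / q.eval x / (p.eval (x + 1) / q.eval (x + 1)) - 1) =O[atTop]
      fun x => (x ^ 2)⁻¹ := by
  have hq : q ≠ 0 := fun h => hp (degree_eq_bot.1 (by rw [hdeg, h, degree_zero]))
  have hD : taylor 1 p * q ≠ 0 := mul_ne_zero (by simpa using hp) hq
  refine EventuallyEq.trans_isBigO ?_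
    (isBigO_eval_div_eval_of_degree_X_pow_mul_le hD
      (degree_X_sq_mul_sub_taylor_mul_le hp hdeg hlead 1))
  filter_upwards [eventually_atTop_not_isRoot _ hD,
    eventually_atTop_not_isRoot _ (show taylor (1 : 𝕜) q ≠ 0 by simpa using hq)] with x hDx hqx
  simp only [IsRoot.def, eval_mul, eval_sub, taylor_eval] at *
  rw [div_div_div_eq, div_sub_one (mul_comm (eval (x + 1) p) _ ▸ hDx), mul_comm (eval x q)]

end OrderedField

lemma Polynomial.summable_norm_eval_ratio_zpow_sub_one {p q : ℝ[X]} (hp : p ≠ 0)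
    (hdeg : p.degree = q.degree) (hlead : p.leadingCoeff = q.leadingCoeff) {e : ℕ → ℤ}
    (he : ∀ n, e n = 1 ∨ e n = -1) :
    Summable fun n : ℕ => ‖(p.eval (n : ℝ) / q.eval (n : ℝ) /
      (p.eval ((n + 1 : ℕ) : ℝ) / q.eval ((n + 1 : ℕ) : ℝ))) ^ e n - 1‖ := by
  have hsum := Real.summable_nat_pow_inv.2 one_lt_two
  have hs := (isBigO_eval_ratio_sub_one hp hdeg hlead).comp_tendsto tendsto_natCast_atTop_atTop
  have hs1 := tendsto_sub_nhds_zero_iff.1 (hs.trans_tendsto hsum.tendsto_atTop_zero)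
  push_cast
  exact summable_of_isBigO_nat hsum ((Asymptotics.isBigO_zpow_sub_one hs1 he).trans hs).norm_left

lemma exists_tendsto_prod_Icc_zpow_ne_zero {r : ℕ → ℝ} {e : ℕ → ℤ} (hr : Tendsto r atTop (𝓝 1))
    (hr_ne : ∀ n, 1 ≤ n → r n ≠ 0) (he : ∀ n, e n = 1 ∨ e n = -1)
    (he_odd : ∀ k, e (2 * k + 1) = -e (2 * k))
    (hsum : Summable fun n => ‖(r n / r (n + 1)) ^ e n - 1‖) :
    ∃ L ≠ 0, Tendsto (fun N => ∏ n ∈ Icc 1 N, r n ^ e n) atTop (𝓝 L) := by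
  -- `x 0 = 1` makes `∏ n ∈ range (N + 1), x n` the `N`-th partial product
  set x : ℕ → ℝ := Function.update (fun n => r n ^ e n) 0 1 with hx_def
  have hx_ne : ∀ n, x n ≠ 0 := by
    rintro (_ | n)
    · simp [x]
    · rw [hx_def, Function.update_of_ne n.succ_ne_zero]
      exact zpow_ne_zero _ (hr_ne _ n.succ_pos)
  have hx : Tendsto x atTop (𝓝 1) := by
    have := (Asymptotics.isBigO_zpow_sub_one hr he).trans_tendsto (tendsto_sub_nhds_zero_iff.2 hr)
    refine (tendsto_sub_nhds_zero_iff.1 this).congr' ?_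
    filter_upwards [eventually_ne_atTop 0] with n hn using by simp [x, hn]
  have hsum_pairs : Summable fun k => ‖x (2 * k) * x (2 * k + 1) - 1‖ := by
    refine (hsum.comp_injective (mul_right_injective₀ two_ne_zero)).congr_cofinite ?_
    filter_upwards [eventually_cofinite_ne 0] with k hk
    rw [Function.comp_apply, hx_def, Function.update_of_ne (by omega),
      Function.update_of_ne (by omega), he_odd, zpow_neg, div_zpow, div_eq_mul_inv]
  obtain ⟨L, hL, hlim⟩ :=
    exists_tendsto_prod_range_ne_zero (fun k => mul_ne_zero (hx_ne _) (hx_ne _)) hsum_pairs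
  refine ⟨L, hL, ((tendsto_add_atTop_iff_nat 1).2
    (tendsto_prod_range_of_tendsto_prod_pairs hx hlim)).congr fun N => ?_⟩
  rw [prod_range_succ', ← Ico_add_one_right_eq_Icc, prod_Ico_eq_prod_range]
  simp [x, add_comm]

/-- If `p, q` are nonzero real polynomials, nonvanishing at the positive integers,
with the same degree and the same leading coefficient, then the partial products
`∏_{n=1}^{N} (p(n)/q(n))^{u_n}` converge to a nonzero limit. -/
theorem stmt_2 (p q : Polynomial ℝ) (hp : p ≠ 0) (hq : q ≠ 0)
    (hpn : ∀ n : ℕ, 1 ≤ n → p.eval (n : ℝ) ≠ 0)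
    (hqn : ∀ n : ℕ, 1 ≤ n → q.eval (n : ℝ) ≠ 0)
    (hdeg : p.degree = q.degree) (hlead : p.leadingCoeff = q.leadingCoeff) :
    ∃ L : ℝ, L ≠ 0 ∧
      Tendsto (fun N : ℕ => ∏ n ∈ Finset.Icc 1 N,
        (p.eval (n : ℝ) / q.eval (n : ℝ)) ^ (u n)) atTop (𝓝 L) := by
  have hr : Tendsto (fun n : ℕ => p.eval (n : ℝ) / q.eval (n : ℝ)) atTop (𝓝 1) := by
    have := div_tendsto_atTop_leadingCoeff_div_of_degree_eq p q hdeg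
    rw [hlead, div_self (leadingCoeff_ne_zero.2 hq)] at this
    exact this.comp tendsto_natCast_atTop_atTop
  exact exists_tendsto_prod_Icc_zpow_ne_zero hr
    (fun n hn => div_ne_zero (hpn n hn) (hqn n hn)) u_eq_one_or_neg_one u_two_mul_add_one
    (summable_norm_eval_ratio_zpow_sub_one hp hdeg hlead u_eq_one_or_neg_one)
end
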